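/- arXiv:2504.12730 — 4 statements merged into one kernel-verified Lean document; each statement's English description precedes it below -/
import Mathlib

section
/- For all natural numbers p ≥ 2 and q ≥ 2 there exists a unital star-algebra homomorphism from M_2(ℂ) × M_3(ℂ) to M_p(ℂ) × M_q(ℂ). -/
/-!
Taking `a` copies of the identity representation of `M₂` and `b` copies of that of `M₃` in
block-diagonal position gives a unital ⋆-homomorphism `M₂ × M₃ → M_{2a+3b}`, and every `n ≥ 2`
is of the form `2a + 3b`. Pairing two such maps lands in `M_p × M_q`.
-/

namespace Matrix

variable {R α : Type*} [CommSemiring R] [Semiring α] [StarRing α] [Algebra R α]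
  {m n : Type*} [Fintype m] [Fintype n] [DecidableEq m] [DecidableEq n]

variable (R) in
/-- The ampliation `A ↦ A ⊗ 1_o`. -/
def ampliationStarAlgHom (o : Type*) [Fintype o] [DecidableEq o] :
    Matrix m m α →⋆ₐ[R] Matrix (m × o) (m × o) α where
  __ := (blockDiagonalRingHom m o α).comp (Pi.constRingHom o _)
  commutes' r := by
    change blockDiagonal (fun _ => algebraMap R _ r) = _
    simp [algebraMap_eq_diagonal, blockDiagonal_diagonal]
  map_star' A := (blockDiagonal_conjTranspose fun _ : o => A).symm

variable (R α) in
def fromBlocksDiagStarAlgHom :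
    Matrix m m α × Matrix n n α →⋆ₐ[R] Matrix (m ⊕ n) (m ⊕ n) α where
  toFun x := fromBlocks x.1 0 0 x.2
  map_one' := fromBlocks_one
  map_mul' x y := by simp [fromBlocks_multiply]
  map_zero' := fromBlocks_zero
  map_add' x y := by simp [fromBlocks_add]
  commutes' r := by simp [algebraMap_eq_diagonal, fromBlocks_diagonal]
  map_star' x := by simp [star_eq_conjTranspose, fromBlocks_conjTranspose]

variable (R α) in
def reindexStarAlgEquiv (e : m ≃ n) : Matrix m m α ≃⋆ₐ[R] Matrix n n α :=
  .ofAlgEquiv (reindexAlgEquiv R α e) fun M => (conjTranspose_reindex e e M).symm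

variable (R α) in
theorem nonempty_starAlgHom_prod_fin (k l a b : ℕ) :
    Nonempty (Matrix (Fin k) (Fin k) α × Matrix (Fin l) (Fin l) α →⋆ₐ[R]
      Matrix (Fin (k * a + l * b)) (Fin (k * a + l * b)) α) :=
  ⟨(reindexStarAlgEquiv R α ((finProdFinEquiv.sumCongr finProdFinEquiv).trans
      finSumFinEquiv)).toStarAlgHom.comp <|
    (fromBlocksDiagStarAlgHom R α).comp <|
      ((ampliationStarAlgHom R (Fin a)).comp (StarAlgHom.fst R _ _)).prod
        ((ampliationStarAlgHom R (Fin b)).comp (StarAlgHom.snd R _ _))⟩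

end Matrix

theorem Nat.exists_eq_two_mul_add_three_mul {n : ℕ} (hn : 2 ≤ n) : ∃ a b, n = 2 * a + 3 * b := by
  rcases Nat.even_or_odd n with ⟨k, hk⟩ | ⟨k, hk⟩
  · exact ⟨k, 0, by omega⟩
  · exact ⟨k - 1, 1, by omega⟩

theorem stmt_2 (p q : ℕ) (hp : 2 ≤ p) (hq : 2 ≤ q) :
    Nonempty ((Matrix (Fin 2) (Fin 2) ℂ × Matrix (Fin 3) (Fin 3) ℂ) →⋆ₐ[ℂ]
      (Matrix (Fin p) (Fin p) ℂ × Matrix (Fin q) (Fin q) ℂ)) := by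
  obtain ⟨a, b, rfl⟩ := Nat.exists_eq_two_mul_add_three_mul hp
  obtain ⟨c, d, rfl⟩ := Nat.exists_eq_two_mul_add_three_mul hq
  obtain ⟨f⟩ := Matrix.nonempty_starAlgHom_prod_fin ℂ ℂ 2 3 a b
  obtain ⟨g⟩ := Matrix.nonempty_starAlgHom_prod_fin ℂ ℂ 2 3 c d
  exact ⟨f.prod g⟩
end

section
/- Let p and q be coprime natural numbers with p ≥ 2 and q ≥ 2, and let ℓ be a natural number with 2^ℓ > p·q. Then there exists a unital star-algebra homomorphism from M_p(ℂ) × M_q(ℂ) into the product C*-algebra ∏_{k = 0}^{ℓ} M_{2^k·3^(ℓ−k)}(ℂ) (the product over k : Fin (ℓ+1) of the matrix algebras M_{2^k·3^(ℓ−k)}(ℂ), with coordinatewise operations and star). -/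
noncomputable section

/-- Pi lift of star algebra homomorphisms. -/
def myPiStarAlgHom {R A : Type*} {ι : Type*} {B : ι → Type*} [CommSemiring R]
    [Semiring A] [Algebra R A] [Star A] [∀ i, Semiring (B i)] [∀ i, Algebra R (B i)]
    [∀ i, Star (B i)] (f : ∀ i, A →⋆ₐ[R] B i) : A →⋆ₐ[R] ∀ i, B i :=
  { Pi.algHom _ _ (fun i => (f i).toAlgHom) with
    map_star' := fun a => by
      funext i
      simpa using map_star (f i) a }

/-- Block diagonal as a star algebra homomorphism. -/
def myBlockDiagStarAlgHom {ι : Type*} [Fintype ι] [DecidableEq ι]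
    (m : ι → Type*) [∀ i, Fintype (m i)] [∀ i, DecidableEq (m i)] :
    (∀ i, Matrix (m i) (m i) ℂ) →⋆ₐ[ℂ] Matrix (Σ i, m i) (Σ i, m i) ℂ :=
  { Matrix.blockDiagonal'RingHom m ℂ with
    commutes' := fun c => by
      show Matrix.blockDiagonal' _ = _
      have : (algebraMap ℂ (∀ i, Matrix (m i) (m i) ℂ)) c =
          c • (1 : ∀ i, Matrix (m i) (m i) ℂ) := by
        rw [Algebra.algebraMap_eq_smul_one]
      rw [this, Matrix.blockDiagonal'_smul, Matrix.blockDiagonal'_one,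
        ← Algebra.algebraMap_eq_smul_one]
    map_star' := fun M => by
      show Matrix.blockDiagonal' (star M) = star (Matrix.blockDiagonal' M)
      have h1 : star M = fun i => Matrix.conjTranspose (M i) := rfl
      rw [h1, Matrix.star_eq_conjTranspose, ← Matrix.blockDiagonal'_conjTranspose] }

/-- Reindexing as a star algebra homomorphism. -/
def myReindexStarAlgHom {m n : Type*} [Fintype m] [DecidableEq m] [Fintype n] [DecidableEq n]
    (e : m ≃ n) : Matrix m m ℂ →⋆ₐ[ℂ] Matrix n n ℂ :=
  { (Matrix.reindexAlgEquiv ℂ ℂ e).toAlgHom with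
    map_star' := fun M => by
      show Matrix.reindex e e (star M) = star (Matrix.reindex e e M)
      rw [Matrix.star_eq_conjTranspose, Matrix.star_eq_conjTranspose,
        Matrix.conjTranspose_reindex] }

/-- The embedding into a single matrix algebra of size `a*p + b*q`. -/
def myEmbed (p q a b : ℕ) :
    (Matrix (Fin p) (Fin p) ℂ × Matrix (Fin q) (Fin q) ℂ) →⋆ₐ[ℂ]
      Matrix (Σ i : Fin a ⊕ Fin b, Fin (Sum.elim (fun _ => p) (fun _ => q) i))
        (Σ i : Fin a ⊕ Fin b, Fin (Sum.elim (fun _ => p) (fun _ => q) i)) ℂ :=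
  (myBlockDiagStarAlgHom (fun i => Fin (Sum.elim (fun _ => p) (fun _ => q) i))).comp
    (myPiStarAlgHom (fun i => match i with
      | Sum.inl _ => by exact StarAlgHom.fst ℂ (Matrix (Fin p) (Fin p) ℂ) (Matrix (Fin q) (Fin q) ℂ)
      | Sum.inr _ => by exact StarAlgHom.snd ℂ (Matrix (Fin p) (Fin p) ℂ) (Matrix (Fin q) (Fin q) ℂ)))

theorem my_rep (p q : ℕ) (hpq : Nat.Coprime p q) (hp : 2 ≤ p) (hq : 2 ≤ q)
    (n : ℕ) (hn : p * q ≤ n) : ∃ a b : ℕ, a * p + b * q = n := by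
  have F := frobeniusNumber_pair hpq hp hq
  have hsum : p + q ≤ p * q := Nat.add_le_mul hp hq
  have hmem : n ∈ AddSubmonoid.closure ({p, q} : Set ℕ) := by
    by_contra h
    have := F.2 h
    omega
  rw [AddSubmonoid.mem_closure_pair] at hmem
  obtain ⟨a, b, hab⟩ := hmem
  exact ⟨a, b, by simpa [smul_eq_mul] using hab⟩

theorem stmt_4 (p q : ℕ) (hpq : Nat.Coprime p q) (hp : 2 ≤ p) (hq : 2 ≤ q)
    (ℓ : ℕ) (hl : p * q < 2 ^ ℓ) :
    Nonempty ((Matrix (Fin p) (Fin p) ℂ × Matrix (Fin q) (Fin q) ℂ) →⋆ₐ[ℂ]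
      (∀ k : Fin (ℓ + 1),
        Matrix (Fin (2 ^ (k : ℕ) * 3 ^ (ℓ - (k : ℕ)))) (Fin (2 ^ (k : ℕ) * 3 ^ (ℓ - (k : ℕ)))) ℂ)) := by
  have key : ∀ k : Fin (ℓ + 1),
      Nonempty ((Matrix (Fin p) (Fin p) ℂ × Matrix (Fin q) (Fin q) ℂ) →⋆ₐ[ℂ]
        Matrix (Fin (2 ^ (k : ℕ) * 3 ^ (ℓ - (k : ℕ)))) (Fin (2 ^ (k : ℕ) * 3 ^ (ℓ - (k : ℕ)))) ℂ) := by
    intro k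
    set n := 2 ^ (k : ℕ) * 3 ^ (ℓ - (k : ℕ)) with hn_def
    have hle : 2 ^ ℓ ≤ n := by
      have hk : (k : ℕ) ≤ ℓ := Nat.lt_succ_iff.mp k.isLt
      calc 2 ^ ℓ = 2 ^ (k : ℕ) * 2 ^ (ℓ - (k : ℕ)) := by
            rw [← pow_add]; congr 1; omega
        _ ≤ 2 ^ (k : ℕ) * 3 ^ (ℓ - (k : ℕ)) :=
            Nat.mul_le_mul_left _ (Nat.pow_le_pow_left (by norm_num) _)
    obtain ⟨a, b, hab⟩ := my_rep p q hpq hp hq n (le_trans hl.le hle)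
    have hcard : Fintype.card
        (Σ i : Fin a ⊕ Fin b, Fin (Sum.elim (fun _ => p) (fun _ => q) i)) = n := by
      simp only [Fintype.card_sigma, Fintype.sum_sum_type, Sum.elim_inl, Sum.elim_inr,
        Fintype.card_fin, Finset.sum_const, Finset.card_univ, smul_eq_mul]
      omega
    let e := Fintype.equivFinOfCardEq hcard
    exact ⟨(myReindexStarAlgHom e).comp (myEmbed p q a b)⟩
  exact ⟨myPiStarAlgHom (fun k => (key k).some)⟩

end
end

section
/- Let A be a complex C*-algebra and β a *-automorphism of A. Suppose there exist sequences (v_n) and (w_n) in A with ‖v_n‖ ≤ 1 and ‖w_n‖ ≤ 1 for all n, such that for every a ∈ A the sequence v_n a v_n* converges in norm to β(a) and the sequence w_n a w_n* converges in norm to β⁻¹(a). Then every function θ : A → [0,∞] that is lower semicontinuous with respect to the norm topology, monotone on positive elements, and tracial satisfies θ(β(x)) = θ(x) for every positive element x ∈ A. -/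
open Filter Topology

private lemma key_step {A : Type*} [NonUnitalCStarAlgebra A] [PartialOrder A] [StarOrderedRing A]
    (θ : A → ENNReal)
    (hmono : ∀ a b : A, 0 ≤ a → a ≤ b → θ a ≤ θ b)
    (htr : ∀ x : A, θ (star x * x) = θ (x * star x))
    (u x : A) (hu : ‖u‖ ≤ 1) (hx : 0 ≤ x) : θ (u * x * star u) ≤ θ x := by
  set s := CFC.sqrt x with hs
  have hs0 : 0 ≤ s := CFC.sqrt_nonneg (a := x)
  have hssa : star s = s := (IsSelfAdjoint.of_nonneg hs0).star_eq
  have hss : s * s = x := CFC.sqrt_mul_sqrt_self x hx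
  have h1 : u * x * star u = star (s * star u) * (s * star u) := by
    rw [star_mul, star_star, hssa]
    rw [← hss]; noncomm_ring
  have h2 : (s * star u) * star (s * star u) = s * (star u * u) * s := by
    rw [star_mul, star_star, hssa]; noncomm_ring
  have hconj : s * (star u * u) * s ≤ ‖star u * u‖ • (s * s) := by
    have := CStarAlgebra.star_left_conjugate_le_norm_smul (a := s) (b := star u * u)
      (IsSelfAdjoint.star_mul_self u)
    rwa [hssa] at this
  have hnorm : ‖star u * u‖ ≤ 1 := by
    calc ‖star u * u‖ ≤ ‖star u‖ * ‖u‖ := norm_mul_le _ _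
      _ ≤ 1 * 1 := by rw [norm_star]; exact mul_le_mul hu hu (norm_nonneg u) zero_le_one
      _ = 1 := one_mul 1
  have hsmul : ‖star u * u‖ • (s * s) ≤ s * s := by
    have h0 : (0:A) ≤ s * s := hss ▸ hx
    have : (0:A) ≤ (1 - ‖star u * u‖) • (s * s) :=
      smul_nonneg (by linarith [norm_nonneg (star u * u)]) h0
    have heq : (1 - ‖star u * u‖) • (s * s) = s * s - ‖star u * u‖ • (s * s) := by
      rw [sub_smul, one_smul]
    rw [heq] at this
    exact sub_nonneg.mp this
  calc θ (u * x * star u) = θ ((s * star u) * star (s * star u)) := by rw [h1, htr]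
    _ = θ (s * (star u * u) * s) := by rw [h2]
    _ ≤ θ (s * s) := by
        refine hmono _ _ ?_ (hconj.trans hsmul)
        have : s * (star u * u) * s = star (u * s) * (u * s) := by
          rw [star_mul, hssa]; noncomm_ring
        rw [this]; exact star_mul_self_nonneg _
    _ = θ x := by rw [hss]

private lemma lsc_le {A : Type*} [NonUnitalCStarAlgebra A]
    (θ : A → ENNReal) (hθ : LowerSemicontinuous θ) {f : ℕ → A} {L : A} {c : ENNReal}
    (hf : Tendsto f atTop (𝓝 L)) (hle : ∀ n, θ (f n) ≤ c) : θ L ≤ c := by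
  by_contra h
  push_neg at h
  have := (hθ L c h).filter_mono (le_refl _)
  have h2 : ∀ᶠ n in atTop, c < θ (f n) := hf.eventually (hθ L c h)
  obtain ⟨n, hn⟩ := h2.exists
  exact absurd (hle n) (not_le.mpr hn)

theorem stmt_9 {A : Type*} [NonUnitalCStarAlgebra A] [PartialOrder A] [StarOrderedRing A]
    (β : A ≃⋆ₐ[ℂ] A) (v w : ℕ → A)
    (hv : ∀ n, ‖v n‖ ≤ 1) (hw : ∀ n, ‖w n‖ ≤ 1)
    (hvconv : ∀ a : A, Tendsto (fun n => v n * a * star (v n)) atTop (𝓝 (β a)))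
    (hwconv : ∀ a : A, Tendsto (fun n => w n * a * star (w n)) atTop (𝓝 (β.symm a))) :
    ∀ θ : A → ENNReal, LowerSemicontinuous θ →
      (∀ a b : A, 0 ≤ a → a ≤ b → θ a ≤ θ b) →
      (∀ x : A, θ (star x * x) = θ (x * star x)) →
      ∀ x : A, 0 ≤ x → θ (β x) = θ x := by
  intro θ hlsc hmono htr x hx
  have hβx : 0 ≤ β x := by
    obtain ⟨s, hs0, hssa, hss⟩ : ∃ s : A, 0 ≤ s ∧ star s = s ∧ s * s = x :=
      ⟨CFC.sqrt x, CFC.sqrt_nonneg (a := x), (IsSelfAdjoint.of_nonneg (CFC.sqrt_nonneg (a := x))).star_eq,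
        CFC.sqrt_mul_sqrt_self x hx⟩
    have : β x = star (β s) * β s := by
      rw [← hss, map_mul, ← map_star, hssa]
    rw [this]; exact star_mul_self_nonneg _
  have h1 : θ (β x) ≤ θ x :=
    lsc_le θ hlsc (hvconv x) fun n => key_step θ hmono htr (v n) x (hv n) hx
  have h2 : θ x ≤ θ (β x) := by
    have := lsc_le θ hlsc (hwconv (β x))
      (fun n => key_step θ hmono htr (w n) (β x) (hw n) hβx)
    rwa [β.symm_apply_apply] at this
  exact le_antisymm h1 h2
end

section
/- Let A be a complex C*-algebra, β a *-automorphism of A, and (v_n) a sequence in A with ‖v_n‖ ≤ 1 for all n, such that for every a ∈ A one has ‖v_n* v_n a − a‖ → 0, ‖a v_n* v_n − a‖ → 0, and ‖v_n a v_n* − β(a)‖ → 0 as n → ∞. Then for every a ∈ A one has ‖v_n* a v_n − β⁻¹(a)‖ → 0 as n → ∞. -/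
/-!
Put `b := β⁻¹ a`. The identity
`v* a v - b = v* (a - v b v*) v + (v* v) (b (v* v) - b) + (v* v b - b)`
bounds `‖v* a v - b‖` by `‖v b v* - β b‖ + ‖b (v* v) - b‖ + ‖v* v b - b‖`,
since `v`, `v*` and `v* v` are contractions; all three terms tend to `0`.
-/

open Filter Topology

section NormedRing

variable {R : Type*} [NonUnitalNormedRing R]

theorem norm_mul_le_of_norm_le_one {x y : R} (hx : ‖x‖ ≤ 1) : ‖x * y‖ ≤ ‖y‖ :=
  (norm_mul_le x y).trans (mul_le_of_le_one_left (norm_nonneg y) hx)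

theorem norm_mul_mul_le_of_norm_le_one {x y z : R} (hx : ‖x‖ ≤ 1) (hz : ‖z‖ ≤ 1) :
    ‖x * y * z‖ ≤ ‖y‖ :=
  calc ‖x * y * z‖ ≤ ‖x * y‖ * ‖z‖ := norm_mul_le _ _
    _ ≤ ‖x * y‖ := mul_le_of_le_one_right (norm_nonneg _) hz
    _ ≤ ‖y‖ := norm_mul_le_of_norm_le_one hx

variable [StarRing R] [NormedStarGroup R]

theorem norm_star_mul_self_le_one {v : R} (hv : ‖v‖ ≤ 1) : ‖star v * v‖ ≤ 1 :=
  (norm_mul_le_of_norm_le_one (by rwa [norm_star])).trans hv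

theorem norm_star_mul_mul_sub_le {v : R} (hv : ‖v‖ ≤ 1) (a b : R) :
    ‖star v * a * v - b‖ ≤
      ‖v * b * star v - a‖ + ‖b * (star v * v) - b‖ + ‖star v * v * b - b‖ := by
  have hv' : ‖star v‖ ≤ 1 := by rwa [norm_star]
  calc ‖star v * a * v - b‖
      = ‖star v * (a - v * b * star v) * v + star v * v * (b * (star v * v) - b) +
          (star v * v * b - b)‖ := by congr 1; noncomm_ring
    _ ≤ ‖star v * (a - v * b * star v) * v‖ + ‖star v * v * (b * (star v * v) - b)‖ +
          ‖star v * v * b - b‖ := norm_add₃_le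
    _ ≤ ‖a - v * b * star v‖ + ‖b * (star v * v) - b‖ + ‖star v * v * b - b‖ := by
      gcongr
      · exact norm_mul_mul_le_of_norm_le_one hv' hv
      · exact norm_mul_le_of_norm_le_one (norm_star_mul_self_le_one hv)
    _ = ‖v * b * star v - a‖ + ‖b * (star v * v) - b‖ + ‖star v * v * b - b‖ := by
      rw [norm_sub_rev]

theorem tendsto_norm_star_mul_mul_sub {ι : Type*} {l : Filter ι} {v : ι → R}
    (hv : ∀ i, ‖v i‖ ≤ 1) {a b : R}
    (hconj : Tendsto (fun i => ‖v i * b * star (v i) - a‖) l (𝓝 0))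
    (hright : Tendsto (fun i => ‖b * (star (v i) * v i) - b‖) l (𝓝 0))
    (hleft : Tendsto (fun i => ‖star (v i) * v i * b - b‖) l (𝓝 0)) :
    Tendsto (fun i => ‖star (v i) * a * v i - b‖) l (𝓝 0) := by
  have hsum := (hconj.add hright).add hleft
  rw [add_zero, add_zero] at hsum
  exact squeeze_zero (fun _ => norm_nonneg _) (fun i => norm_star_mul_mul_sub_le (hv i) a b)
    hsum

end NormedRing

theorem stmt_11 {A : Type*} [NonUnitalCStarAlgebra A]
    (β : A ≃⋆ₐ[ℂ] A) (v : ℕ → A) (hv : ∀ n, ‖v n‖ ≤ 1)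
    (h1 : ∀ a : A, Tendsto (fun n => ‖star (v n) * v n * a - a‖) atTop (𝓝 0))
    (h2 : ∀ a : A, Tendsto (fun n => ‖a * (star (v n) * v n) - a‖) atTop (𝓝 0))
    (h3 : ∀ a : A, Tendsto (fun n => ‖v n * a * star (v n) - β a‖) atTop (𝓝 0)) :
    ∀ a : A, Tendsto (fun n => ‖star (v n) * a * v n - β.symm a‖) atTop (𝓝 0) := by
  intro a
  have hconj := h3 (β.symm a)
  rw [β.apply_symm_apply] at hconj
  exact tendsto_norm_star_mul_mul_sub hv hconj (h2 _) (h1 _)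
end
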